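/- arXiv:2311.10046 — 3 statements merged into one kernel-verified Lean document; each statement's English description precedes it below -/
import Mathlib

section
/- Let m0 = [[0,1,0],[1,0,0],[0,1,1]] and m1 = [[1,1,0],[0,0,1],[0,1,0]] (the Cassaigne matrices) and let C = M·ℝ₊³ where M = [[0,1,1],[1,1,1],[1,0,1]]. Then m0ᵀ·C ∪ m1ᵀ·C = C, and the interiors of m0ᵀ·C and m1ᵀ·C are disjoint. -/
/-! In the coordinates `v = M⁻¹ x` the cone is the orthant, so
`C = {x | x₀ ≤ x₁, x₂ ≤ x₁, x₁ ≤ x₀ + x₂}`. The maps `m0ᵀ x = (x₁, x₀ + x₂, x₂)` and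
`m1ᵀ x = (x₀, x₀ + x₂, x₁)` send `C` onto the halves `C ∩ {x₂ ≤ x₀}` and `C ∩ {x₀ ≤ x₂}`.
These cover `C`, and their intersection lies in the hyperplane `x₀ = x₂`, which has empty
interior. -/

open Matrix

/-- The cone `m · ℝ₊³`. -/
def matCone (m : Matrix (Fin 3) (Fin 3) ℝ) : Set (Fin 3 → ℝ) :=
  {y | ∃ v : Fin 3 → ℝ, (∀ i, 0 ≤ v i) ∧ y = m.mulVec v}

theorem interior_setOf_apply_eq_apply_eq_empty {𝕜 ι : Type*} [NontriviallyNormedField 𝕜]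
    {i j : ι} (hij : i ≠ j) : interior {x : ι → 𝕜 | x i = x j} = ∅ := by
  classical
  set s : Submodule 𝕜 (ι → 𝕜) :=
    LinearMap.ker (LinearMap.proj (R := 𝕜) (φ := fun _ : ι => 𝕜) i - LinearMap.proj j)
  have hs : (s : Set (ι → 𝕜)) = {x | x i = x j} := by ext x; simp [s, sub_eq_zero]
  have hs_ne_top : s ≠ ⊤ := fun h => by
    have : Pi.single i (1 : 𝕜) ∈ s := h ▸ Submodule.mem_top
    simp [s, hij] at this
  rw [← hs, ← Set.not_nonempty_iff_eq_empty]
  exact fun h => hs_ne_top (s.eq_top_of_nonempty_interior' h)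

namespace Cassaigne

abbrev m0 : Matrix (Fin 3) (Fin 3) ℝ := !![0, 1, 0; 1, 0, 0; 0, 1, 1]

abbrev m1 : Matrix (Fin 3) (Fin 3) ℝ := !![1, 1, 0; 0, 0, 1; 0, 1, 0]

abbrev M : Matrix (Fin 3) (Fin 3) ℝ := !![0, 1, 1; 1, 1, 1; 1, 0, 1]

abbrev cone : Set (Fin 3 → ℝ) := matCone M

lemma M_mulVec (v : Fin 3 → ℝ) : M *ᵥ v = ![v 1 + v 2, v 0 + v 1 + v 2, v 0 + v 2] := by
  ext i; fin_cases i <;> simp [mulVec, dotProduct, Fin.sum_univ_three]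

lemma m0_transpose_mulVec (x : Fin 3 → ℝ) : m0ᵀ *ᵥ x = ![x 1, x 0 + x 2, x 2] := by
  ext i; fin_cases i <;> simp [mulVec, dotProduct, Fin.sum_univ_three]

lemma m1_transpose_mulVec (x : Fin 3 → ℝ) : m1ᵀ *ᵥ x = ![x 0, x 0 + x 2, x 1] := by
  ext i; fin_cases i <;> simp [mulVec, dotProduct, Fin.sum_univ_three]

lemma mem_cone_iff {x : Fin 3 → ℝ} : x ∈ cone ↔ x 0 ≤ x 1 ∧ x 2 ≤ x 1 ∧ x 1 ≤ x 0 + x 2 := by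
  constructor
  · rintro ⟨v, hv, rfl⟩
    simp only [M_mulVec, cons_val]
    refine ⟨?_, ?_, ?_⟩ <;> linarith [hv 0, hv 1, hv 2]
  · rintro ⟨h01, h21, h102⟩
    refine ⟨![x 1 - x 0, x 1 - x 2, x 0 + x 2 - x 1], ?_, ?_⟩
    · intro i; fin_cases i <;> simp <;> linarith
    · rw [M_mulVec]; ext i; fin_cases i <;> simp; ring

lemma m0_transpose_image_cone : m0ᵀ.mulVec '' cone = {x ∈ cone | x 2 ≤ x 0} := by
  ext y
  simp only [Set.mem_image, Set.mem_ofPred_eq, mem_cone_iff]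
  constructor
  · rintro ⟨x, ⟨h01, h21, h102⟩, rfl⟩
    simp only [m0_transpose_mulVec, cons_val]
    refine ⟨⟨?_, ?_, ?_⟩, ?_⟩ <;> linarith
  · rintro ⟨⟨h01, h21, h102⟩, h20⟩
    refine ⟨![y 1 - y 2, y 0, y 2], ?_, ?_⟩
    · simp only [cons_val]; refine ⟨?_, ?_, ?_⟩ <;> linarith
    · rw [m0_transpose_mulVec]; ext i; fin_cases i <;> simp

lemma m1_transpose_image_cone : m1ᵀ.mulVec '' cone = {x ∈ cone | x 0 ≤ x 2} := by
  ext y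
  simp only [Set.mem_image, Set.mem_ofPred_eq, mem_cone_iff]
  constructor
  · rintro ⟨x, ⟨h01, h21, h102⟩, rfl⟩
    simp only [m1_transpose_mulVec, cons_val]
    refine ⟨⟨?_, ?_, ?_⟩, ?_⟩ <;> linarith
  · rintro ⟨⟨h01, h21, h102⟩, h02⟩
    refine ⟨![y 0, y 2, y 1 - y 0], ?_, ?_⟩
    · simp only [cons_val]; refine ⟨?_, ?_, ?_⟩ <;> linarith
    · rw [m1_transpose_mulVec]; ext i; fin_cases i <;> simp

end Cassaigne

/-- `C = M·ℝ₊³` is a domain for the Cassaigne algorithm: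
`m0ᵀ·C ∪ m1ᵀ·C = C` with disjoint interiors. -/
theorem cassaigne_domain :
    let m0 : Matrix (Fin 3) (Fin 3) ℝ := !![0, 1, 0; 1, 0, 0; 0, 1, 1]
    let m1 : Matrix (Fin 3) (Fin 3) ℝ := !![1, 1, 0; 0, 0, 1; 0, 1, 0]
    let M : Matrix (Fin 3) (Fin 3) ℝ := !![0, 1, 1; 1, 1, 1; 1, 0, 1]
    let C : Set (Fin 3 → ℝ) := matCone M
    ((m0.transpose.mulVec '' C) ∪ (m1.transpose.mulVec '' C) = C) ∧
    (interior (m0.transpose.mulVec '' C) ∩ interior (m1.transpose.mulVec '' C) = ∅) := by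
  intro m0 m1 M C
  have h0 : m0ᵀ.mulVec '' C = {x ∈ C | x 2 ≤ x 0} := Cassaigne.m0_transpose_image_cone
  have h1 : m1ᵀ.mulVec '' C = {x ∈ C | x 0 ≤ x 2} := Cassaigne.m1_transpose_image_cone
  rw [h0, h1, ← Set.sep_or, ← interior_inter, ← Set.sep_and]
  constructor
  · exact Set.sep_eq_self_iff_mem_true.2 fun x _ => le_total _ _
  · refine Set.subset_empty_iff.1 ?_
    rw [← interior_setOf_apply_eq_apply_eq_empty (show (0 : Fin 3) ≠ 2 by decide)]
    exact interior_mono fun x hx => le_antisymm hx.2.2 hx.2.1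
end

section
/- Let m0 = [[0,1,0],[1,0,0],[0,1,1]] and m1 = [[1,1,0],[0,0,1],[0,1,0]]. Then m0·ℝ₊³ ∪ m1·ℝ₊³ = ℝ₊³ and the interiors of m0·ℝ₊³ and m1·ℝ₊³ are disjoint. -/
/-! Both matrices are unimodular, so `m · ℝ₊³` is the set of `y` with `m⁻¹ y ≥ 0`, and its
interior the set with `m⁻¹ y > 0`. As `m0⁻¹ y = (y1, y0, y2 - y0)` and
`m1⁻¹ y = (y0 - y2, y2, y1)`, the two cones are the halves `y0 ≤ y2` and `y2 ≤ y0` of `ℝ₊³`. -/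

open Matrix

open Set

lemma matCone_eq_setOf_mulVec_nonneg {m n : Matrix (Fin 3) (Fin 3) ℝ} (h : n * m = 1) :
    matCone m = {y | ∀ i, 0 ≤ (n *ᵥ y) i} := by
  ext y
  constructor
  · rintro ⟨v, hv, rfl⟩
    show ∀ i, _
    rwa [mulVec_mulVec, h, one_mulVec]
  · intro hy
    exact ⟨n *ᵥ y, hy, by rw [mulVec_mulVec, mul_eq_one_comm.mp h, one_mulVec]⟩

lemma interior_setOf_mulVec_nonneg {ι : Type*} [Fintype ι] [DecidableEq ι]
    {m n : Matrix ι ι ℝ} (h : n * m = 1) :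
    interior {y : ι → ℝ | ∀ i, 0 ≤ (n *ᵥ y) i} = {y | ∀ i, 0 < (n *ᵥ y) i} := by
  let e : (ι → ℝ) ≃ₜ (ι → ℝ) :=
    { toFun := n.mulVec
      invFun := m.mulVec
      left_inv := fun y => by rw [mulVec_mulVec, mul_eq_one_comm.mp h, one_mulVec]
      right_inv := fun y => by rw [mulVec_mulVec, h, one_mulVec]
      continuous_toFun := by fun_prop
      continuous_invFun := by fun_prop }
  have hpi (s : Set ℝ) : e ⁻¹' univ.pi (fun _ => s) = {y | ∀ i, (n *ᵥ y) i ∈ s} := by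
    ext y; simp [e]
  calc interior {y | ∀ i, 0 ≤ (n *ᵥ y) i}
      = interior (e ⁻¹' univ.pi fun _ => Ici 0) := by rw [hpi]; rfl
    _ = e ⁻¹' univ.pi fun _ => Ioi 0 := by
      rw [← e.preimage_interior, interior_pi_set finite_univ]; simp only [interior_Ici]
    _ = _ := hpi _

/-- The Cassaigne matrices form a matrices graph:
`m0·ℝ₊³ ∪ m1·ℝ₊³ = ℝ₊³` and the interiors are disjoint. -/
theorem cassaigne_matrices_graph :
    let m0 : Matrix (Fin 3) (Fin 3) ℝ := !![0, 1, 0; 1, 0, 0; 0, 1, 1]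
    let m1 : Matrix (Fin 3) (Fin 3) ℝ := !![1, 1, 0; 0, 0, 1; 0, 1, 0]
    (matCone m0 ∪ matCone m1 = {y : Fin 3 → ℝ | ∀ i, 0 ≤ y i}) ∧
    (interior (matCone m0) ∩ interior (matCone m1) = ∅) := by
  intro m0 m1
  have h0 : !![0, 1, 0; 1, 0, 0; -1, 0, 1] * m0 = 1 := by
    rw [one_fin_three]; norm_num [m0, Matrix.mul_fin_three]
  have h1 : !![1, 0, -1; 0, 0, 1; 0, 1, 0] * m1 = 1 := by
    rw [one_fin_three]; norm_num [m1, Matrix.mul_fin_three]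
  rw [matCone_eq_setOf_mulVec_nonneg h0, matCone_eq_setOf_mulVec_nonneg h1,
    interior_setOf_mulVec_nonneg h0, interior_setOf_mulVec_nonneg h1]
  refine ⟨?_, ?_⟩ <;> ext y <;>
    simp [mulVec, dotProduct, Fin.sum_univ_three, Fin.forall_fin_succ] <;> grind
end

section
/- Let m0 = [[1,0,0],[0,1,0],[1,1,1]], m1 = [[1,0,0],[1,1,1],[0,0,1]], m2 = [[1,1,1],[0,1,0],[0,0,1]], m3 = [[0,1,1],[1,0,1],[1,1,0]] (the reverse algorithm matrices), and let D = m3·ℝ₊³. Then m0ᵀD ∪ m1ᵀD ∪ m2ᵀD ∪ m3ᵀD = D, with pairwise Lebesgue-disjoint union (interiors disjoint). -/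
open Matrix

/-!
The matrices `m3 * m_k` are symmetric, so `m_kᵀ * m3 = m3 * m_k` and `m_kᵀ D = m3 (m_k ℝ₊³)`.
As `m3` is invertible, it suffices that the cones `m_k ℝ₊³` tile `ℝ₊³`. A cone `m ℝ₊³` with
`det m > 0` is `{x | 0 ≤ adj(m) x}`, with interior `{x | 0 < adj(m) x}`. For `m0`, `m1`, `m2` this
is the part of the orthant where `x₂`, `x₁`, resp. `x₀` is at least the sum of the other two
coordinates, and for `m3` the part where the coordinates satisfy the triangle inequalities.
-/

section
variable {n R : Type*} [Fintype n] [DecidableEq n]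

lemma mulVec_image_eq_preimage [Semiring R] {A B : Matrix n n R} (hBA : B * A = 1)
    (hAB : A * B = 1) (S : Set (n → R)) : A.mulVec '' S = B.mulVec ⁻¹' S :=
  congrFun (Set.image_eq_preimage_of_inverse (f := A.mulVec) (g := B.mulVec)
    (fun v ↦ by rw [mulVec_mulVec, hBA, one_mulVec])
    (fun v ↦ by rw [mulVec_mulVec, hAB, one_mulVec])) S

variable [Ring R] [TopologicalSpace R] [IsTopologicalRing R]

lemma interior_preimage_mulVec {A B : Matrix n n R} (hBA : B * A = 1) (hAB : A * B = 1)
    (S : Set (n → R)) : interior (B.mulVec ⁻¹' S) = B.mulVec ⁻¹' interior S := by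
  have hB : IsOpenMap B.mulVec := fun U hU ↦ by
    rw [mulVec_image_eq_preimage hAB hBA]
    exact hU.preimage (continuous_const.matrix_mulVec continuous_id)
  exact (hB.preimage_interior_eq_interior_preimage
    (continuous_const.matrix_mulVec continuous_id) S).symm

lemma interior_mulVec_image {A : Matrix n n R} (hA : IsUnit A) (S : Set (n → R)) :
    interior (A.mulVec '' S) = A.mulVec '' interior S := by
  obtain ⟨u, rfl⟩ := hA
  rw [mulVec_image_eq_preimage u.inv_mul u.mul_inv, mulVec_image_eq_preimage u.inv_mul u.mul_inv,
    interior_preimage_mulVec u.inv_mul u.mul_inv]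

end

lemma interior_Ici_pi {ι α : Type*} [Finite ι] [LinearOrder α] [TopologicalSpace α]
    [OrderTopology α] [DenselyOrdered α] [NoMinOrder α] (x : ι → α) :
    interior (Set.Ici x) = {y | ∀ i, x i < y i} := by
  rw [← Set.pi_univ_Ici, interior_pi_set Set.finite_univ]
  ext y
  simp

lemma mulVec_image_matCone (A m : Matrix (Fin 3) (Fin 3) ℝ) :
    A.mulVec '' matCone m = matCone (A * m) := by
  ext y
  simp [matCone, mulVec_mulVec, eq_comm]

lemma matCone_one : matCone 1 = Set.Ici 0 := by
  ext y
  simp [matCone, Pi.le_def]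

section
variable {m : Matrix (Fin 3) (Fin 3) ℝ}

lemma matCone_eq_preimage_adjugate (hm : 0 < m.det) :
    matCone m = m.adjugate.mulVec ⁻¹' Set.Ici 0 := by
  ext y
  constructor
  · rintro ⟨v, hv, rfl⟩ i
    simpa [mulVec_mulVec, adjugate_mul, smul_mulVec] using mul_nonneg hm.le (hv i)
  · intro hy
    refine ⟨m.det⁻¹ • m.adjugate *ᵥ y, fun i ↦ ?_, ?_⟩
    · simpa using mul_nonneg (inv_nonneg.2 hm.le) (hy i)
    · rw [mulVec_smul, mulVec_mulVec, mul_adjugate, smul_mulVec, one_mulVec, smul_smul,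
        inv_mul_cancel₀ hm.ne', one_smul]

lemma interior_matCone (hm : 0 < m.det) :
    interior (matCone m) = m.adjugate.mulVec ⁻¹' {v | ∀ i, 0 < v i} := by
  have hinv : m.adjugate * (m.det⁻¹ • m) = 1 ∧ (m.det⁻¹ • m) * m.adjugate = 1 := by
    simp [adjugate_mul, mul_adjugate, hm.ne']
  rw [matCone_eq_preimage_adjugate hm, interior_preimage_mulVec hinv.1 hinv.2, interior_Ici_pi]
  rfl

end

def reverseMatrix : Fin 4 → Matrix (Fin 3) (Fin 3) ℝ :=
  ![!![1, 0, 0; 0, 1, 0; 1, 1, 1], !![1, 0, 0; 1, 1, 1; 0, 0, 1],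
    !![1, 1, 1; 0, 1, 0; 0, 0, 1], !![0, 1, 1; 1, 0, 1; 1, 1, 0]]

lemma det_reverseMatrix_pos (k : Fin 4) : 0 < (reverseMatrix k).det := by
  fin_cases k <;> simp [reverseMatrix, det_fin_three]

lemma transpose_reverseMatrix_mul_three (k : Fin 4) :
    (reverseMatrix k)ᵀ * reverseMatrix 3 = reverseMatrix 3 * reverseMatrix k := by
  ext i j
  fin_cases k <;> fin_cases i <;> fin_cases j <;>
    simp [reverseMatrix, mul_apply, Fin.sum_univ_three]

section
variable (x : Fin 3 → ℝ)

lemma adjugate_reverseMatrix_zero_mulVec :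
    (reverseMatrix 0).adjugate *ᵥ x = ![x 0, x 1, -x 0 - x 1 + x 2] := by
  ext i
  fin_cases i <;>
    simp [reverseMatrix, adjugate_fin_three, mulVec, dotProduct, Fin.sum_univ_three, sub_eq_add_neg]

lemma adjugate_reverseMatrix_one_mulVec :
    (reverseMatrix 1).adjugate *ᵥ x = ![x 0, -x 0 + x 1 - x 2, x 2] := by
  ext i
  fin_cases i <;>
    simp [reverseMatrix, adjugate_fin_three, mulVec, dotProduct, Fin.sum_univ_three, sub_eq_add_neg]

lemma adjugate_reverseMatrix_two_mulVec :
    (reverseMatrix 2).adjugate *ᵥ x = ![x 0 - x 1 - x 2, x 1, x 2] := by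
  ext i
  fin_cases i <;>
    simp [reverseMatrix, adjugate_fin_three, mulVec, dotProduct, Fin.sum_univ_three, sub_eq_add_neg]

lemma adjugate_reverseMatrix_three_mulVec :
    (reverseMatrix 3).adjugate *ᵥ x = ![-x 0 + x 1 + x 2, x 0 - x 1 + x 2, x 0 + x 1 - x 2] := by
  ext i
  fin_cases i <;>
    simp [reverseMatrix, adjugate_fin_three, mulVec, dotProduct, Fin.sum_univ_three, sub_eq_add_neg]

end

lemma union_matCone_reverseMatrix :
    matCone (reverseMatrix 0) ∪ matCone (reverseMatrix 1) ∪ matCone (reverseMatrix 2) ∪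
      matCone (reverseMatrix 3) = Set.Ici 0 := by
  ext x
  simp only [matCone_eq_preimage_adjugate (det_reverseMatrix_pos _), Set.mem_union,
    Set.mem_preimage, Set.mem_Ici, Pi.le_def, Fin.forall_fin_succ, IsEmpty.forall_iff, and_true,
    adjugate_reverseMatrix_zero_mulVec, adjugate_reverseMatrix_one_mulVec,
    adjugate_reverseMatrix_two_mulVec, adjugate_reverseMatrix_three_mulVec, Pi.zero_apply,
    cons_val_zero, cons_val_succ, Fin.succ_zero_eq_one, Fin.succ_one_eq_two]
  constructor
  · rintro (((⟨_, _, _⟩ | ⟨_, _, _⟩) | ⟨_, _, _⟩) | ⟨_, _, _⟩) <;> refine ⟨?_, ?_, ?_⟩ <;> linarith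
  · rintro ⟨h0, h1, h2⟩
    by_cases h01 : x 0 + x 1 ≤ x 2
    · exact .inl <| .inl <| .inl ⟨h0, h1, by linarith⟩
    by_cases h02 : x 0 + x 2 ≤ x 1
    · exact .inl <| .inl <| .inr ⟨h0, by linarith, h2⟩
    by_cases h12 : x 1 + x 2 ≤ x 0
    · exact .inl <| .inr ⟨by linarith, h1, h2⟩
    · exact .inr ⟨by linarith, by linarith, by linarith⟩

lemma pairwise_disjoint_interior_matCone_reverseMatrix :
    Pairwise fun i j ↦
      Disjoint (interior (matCone (reverseMatrix i))) (interior (matCone (reverseMatrix j))) := by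
  intro i j hij
  simp only [interior_matCone (det_reverseMatrix_pos _), Set.disjoint_left]
  intro x hi hj
  fin_cases i <;> fin_cases j <;>
    simp only [Fin.zero_eta, Fin.mk_one, Fin.reduceFinMk, Set.mem_preimage, Set.mem_ofPred_eq,
      Fin.forall_fin_succ, IsEmpty.forall_iff, and_true, adjugate_reverseMatrix_zero_mulVec,
      adjugate_reverseMatrix_one_mulVec, adjugate_reverseMatrix_two_mulVec,
      adjugate_reverseMatrix_three_mulVec, cons_val_zero, cons_val_succ] at hi hj <;>
    obtain ⟨_, _, _⟩ := hi <;> obtain ⟨_, _, _⟩ := hj <;>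
    first | exact hij rfl | linarith

/-- `D = m3·ℝ₊³` is a domain for the reverse algorithm:
`m0ᵀD ∪ m1ᵀD ∪ m2ᵀD ∪ m3ᵀD = D` with pairwise disjoint interiors. -/
theorem reverse_algorithm_domain :
    let m0 : Matrix (Fin 3) (Fin 3) ℝ := !![1, 0, 0; 0, 1, 0; 1, 1, 1]
    let m1 : Matrix (Fin 3) (Fin 3) ℝ := !![1, 0, 0; 1, 1, 1; 0, 0, 1]
    let m2 : Matrix (Fin 3) (Fin 3) ℝ := !![1, 1, 1; 0, 1, 0; 0, 0, 1]
    let m3 : Matrix (Fin 3) (Fin 3) ℝ := !![0, 1, 1; 1, 0, 1; 1, 1, 0]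
    let D : Set (Fin 3 → ℝ) := matCone m3
    let P : Fin 4 → Set (Fin 3 → ℝ) :=
      ![m0.transpose.mulVec '' D, m1.transpose.mulVec '' D,
        m2.transpose.mulVec '' D, m3.transpose.mulVec '' D]
    ((P 0 ∪ P 1 ∪ P 2 ∪ P 3) = D) ∧
    (∀ i j : Fin 4, i ≠ j → interior (P i) ∩ interior (P j) = ∅) := by
  intro m0 m1 m2 m3 D P
  have hm3 : IsUnit (reverseMatrix 3) :=
    (isUnit_iff_isUnit_det _).2 (det_reverseMatrix_pos 3).ne'.isUnit
  have hD : D = (reverseMatrix 3).mulVec '' Set.Ici 0 := by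
    change matCone (reverseMatrix 3) = _
    rw [← matCone_one, mulVec_image_matCone, mul_one]
  have hP (k : Fin 4) : P k = (reverseMatrix 3).mulVec '' matCone (reverseMatrix k) := by
    calc P k = (reverseMatrix k)ᵀ.mulVec '' matCone (reverseMatrix 3) := by fin_cases k <;> rfl
      _ = _ := by
        rw [mulVec_image_matCone, mulVec_image_matCone, transpose_reverseMatrix_mul_three]
  refine ⟨?_, fun i j hij ↦ ?_⟩
  · simp only [hP, hD, ← Set.image_union, union_matCone_reverseMatrix]
  · rw [hP, hP, interior_mulVec_image hm3, interior_mulVec_image hm3,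
      ← Set.image_inter (mulVec_injective_of_isUnit hm3),
      (pairwise_disjoint_interior_matCone_reverseMatrix hij).inter_eq, Set.image_empty]
end
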